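/- arXiv:1811.06389 — 2 statements merged into one kernel-verified Lean document; each statement's English description precedes it below -/
import Mathlib

section
/- There is no direction respecting 1-factorization M_1, M_2, M_3, M_4 of the hypercube Q_4 (with respect to the split into directions {1,2,3} and {4}) such that M_i ∪ M_4 is a Hamilton cycle for every i ∈ {1, 2, 3}. -/
open SimpleGraph

/-- The hypercube graph `Q_d`: vertices are subsets of `{1,…,d}`, two subsets adjacent
iff they differ in exactly one element. -/
def cube (d : ℕ) : SimpleGraph (Finset (Fin d)) where
  Adj u v := (symmDiff u v).card = 1
  symm := ⟨fun u v h => by rwa [symmDiff_comm]⟩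
  loopless := ⟨fun u h => by simp [symmDiff_self] at h⟩

/-- `M` is a perfect matching of `G` (as a set of edges): `M` consists of edges of `G`
and every vertex lies in a unique edge of `M`. -/
def IsPM {V : Type*} (G : SimpleGraph V) (M : Set (Sym2 V)) : Prop :=
  M ⊆ G.edgeSet ∧ ∀ v : V, ∃! e, e ∈ M ∧ v ∈ e

/-- `M` is a 1-factorization of `G`: a partition of the edge set of `G` into
perfect matchings. -/
def IsFactorization {V : Type*} {ι : Type*} (G : SimpleGraph V) (M : ι → Set (Sym2 V)) : Prop :=
  (∀ i, IsPM G (M i)) ∧ (∀ i j, i ≠ j → Disjoint (M i) (M j)) ∧ (⋃ i, M i) = G.edgeSet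

/-- The edge set `E` forms a Hamilton cycle: there is a Hamiltonian cycle in the graph
with edge set `E` which uses every edge of `E`. -/
def IsHamCycleSet {V : Type*} [DecidableEq V] (E : Set (Sym2 V)) : Prop :=
  ∃ (v : V) (w : (SimpleGraph.fromEdgeSet E).Walk v v),
    w.IsHamiltonianCycle ∧ ∀ e ∈ E, e ∈ w.edges

/-- The directional matching `D_i` of `Q_d`: all edges in direction `i`, i.e. whose
endpoints differ exactly in the element `i`. -/
def dirMatching (d : ℕ) (i : Fin d) : Set (Sym2 (Finset (Fin d))) :=
  {e | ∃ u v : Finset (Fin d), e = s(u, v) ∧ symmDiff u v = {i}}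

/-- The edge set `M` only uses edges in directions belonging to `S`. -/
def UsesDirections {d : ℕ} (M : Set (Sym2 (Finset (Fin d)))) (S : Set (Fin d)) : Prop :=
  ∀ u v : Finset (Fin d), s(u, v) ∈ M → ∀ i ∈ symmDiff u v, i ∈ S

/-- A 1-factorization of `Q_{k+l}` is direction respecting (w.r.t. the split `k + l`)
if the first `k` matchings use only the first `k` directions and the last `l` matchings
use only the last `l` directions. -/
def DirectionRespecting (k l : ℕ) (M : Fin (k + l) → Set (Sym2 (Finset (Fin (k + l))))) : Prop :=
  ∀ i : Fin (k + l), UsesDirections (M i) {j : Fin (k + l) | ((j : ℕ) < k ↔ (i : ℕ) < k)}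

/-!
The factor `M₄` must consist of all eight edges in direction 4, so `M₁, M₂, M₃` restrict to
1-factorizations of the two 3-cubes `x₄ = 0` and `x₄ = 1`. Call a perfect matching of `Q₃`
directional if all its edges have the same direction; `Q₃` has nine perfect matchings, three of them
directional. Two facts about them are checked by computation:
* `M_i ∪ M₄` is connected only if exactly one of the two restrictions of `M_i` is directional;
* every 1-factorization of `Q₃` has an odd number of directional factors.
Counting the directional restrictions of `M₁, M₂, M₃` over both 3-cubes then gives 3 by the first
fact and an even number by the second.
-/

section Cube

variable {α : Type*} [DecidableEq α] {d : ℕ}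

theorem cube_adj_iff {u v : Finset (Fin d)} : (cube d).Adj u v ↔ ∃ j, v = symmDiff u {j} := by
  change (symmDiff u v).card = 1 ↔ _
  rw [Finset.card_eq_one]
  refine exists_congr fun j => ⟨fun h => ?_, fun h => ?_⟩
  · rw [← h, symmDiff_symmDiff_cancel_left]
  · rw [h, symmDiff_symmDiff_cancel_left]

theorem UsesDirections.mono {M : Set (Sym2 (Finset (Fin d)))} {S T : Set (Fin d)}
    (h : UsesDirections M S) (hST : S ⊆ T) : UsesDirections M T :=
  fun u v huv i hi => hST (h u v huv i hi)

def IsDirectionMap (M : Set (Sym2 (Finset α))) (f : Finset α → α) : Prop :=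
  ∀ v w, s(v, w) ∈ M ↔ w = symmDiff v {f v}

theorem IsDirectionMap.apply_symmDiff {M : Set (Sym2 (Finset α))} {f : Finset α → α}
    (hf : IsDirectionMap M f) (v : Finset α) : f (symmDiff v {f v}) = f v := by
  have hmem : s(symmDiff v {f v}, v) ∈ M := by rw [Sym2.eq_swap, hf]
  rw [hf, symmDiff_assoc, eq_comm, symmDiff_eq_left, symmDiff_eq_bot] at hmem
  exact (Finset.singleton_injective hmem).symm

theorem IsDirectionMap.apply_ne_of_disjoint {M N : Set (Sym2 (Finset α))} {f g : Finset α → α}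
    (hf : IsDirectionMap M f) (hg : IsDirectionMap N g) (hMN : Disjoint M N) (v : Finset α) :
    f v ≠ g v := fun h =>
  Set.disjoint_left.mp hMN ((hf v _).mpr rfl) ((hg v _).mpr (by rw [h]))

theorem IsPM.exists_direction {M : Set (Sym2 (Finset (Fin d)))} {S : Set (Fin d)}
    (hM : IsPM (cube d) M) (hS : UsesDirections M S) (v : Finset (Fin d)) :
    ∃ j ∈ S, ∀ w, s(v, w) ∈ M ↔ w = symmDiff v {j} := by
  obtain ⟨e, ⟨heM, hve⟩, huniq⟩ := hM.2 v
  obtain ⟨w, rfl⟩ := Sym2.mem_iff_exists.mp hve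
  obtain ⟨j, hj⟩ : ∃ j, w = symmDiff v {j} := cube_adj_iff.mp (hM.1 heM)
  subst hj
  refine ⟨j, hS _ _ heM j (by simp [symmDiff_symmDiff_cancel_left]), fun w => ⟨fun hw => ?_, ?_⟩⟩
  · exact Sym2.congr_right.mp (huniq s(v, w) ⟨hw, Sym2.mem_mk_left v w⟩)
  · rintro rfl
    exact heM

theorem IsPM.isDirectionMap_const {M : Set (Sym2 (Finset (Fin d)))} {j : Fin d}
    (hM : IsPM (cube d) M) (hS : UsesDirections M {j}) : IsDirectionMap M fun _ => j := by
  intro v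
  obtain ⟨j', rfl, hj'⟩ := hM.exists_direction hS v
  exact hj'

theorem IsPM.exists_isDirectionMap_castAdd {k l : ℕ} {M : Set (Sym2 (Finset (Fin (k + l))))}
    (hM : IsPM (cube (k + l)) M) (hS : UsesDirections M {j | (j : ℕ) < k}) :
    ∃ ψ : Finset (Fin (k + l)) → Fin k, IsDirectionMap M (Fin.castAdd l ∘ ψ) := by
  choose f hfS hf using hM.exists_direction hS
  exact ⟨fun v => ⟨f v, hfS v⟩, hf⟩

end Cube

section BitVectors

variable {d : ℕ}

def flipBit (x : Fin (2 ^ d)) (j : Fin d) : Fin (2 ^ d) :=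
  ⟨x ^^^ 2 ^ (j : ℕ), Nat.xor_lt_two_pow x.isLt (Nat.pow_lt_pow_right (by norm_num) j.isLt)⟩

def bitSet (x : Fin (2 ^ d)) : Finset (Fin d) := {j | x.val.testBit j}

theorem bitSet_flipBit (x : Fin (2 ^ d)) (j : Fin d) :
    bitSet (flipBit x j) = symmDiff (bitSet x) {j} := by
  ext i
  simp only [bitSet, flipBit, Finset.mem_filter, Finset.mem_univ, true_and, Finset.mem_symmDiff,
    Finset.mem_singleton, Nat.testBit_xor, Nat.testBit_two_pow, Fin.val_inj]
  by_cases h : j = i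
  · subst h; simp
  · simp [h, Ne.symm h]

theorem bitSet_injective : Function.Injective (bitSet (d := d)) := by
  intro x y h
  refine Fin.ext (Nat.eq_of_testBit_eq fun i => ?_)
  by_cases hi : i < d
  · simpa [bitSet] using congrArg (⟨i, hi⟩ ∈ ·) h
  · have hle : 2 ^ d ≤ 2 ^ i := Nat.pow_le_pow_right (by norm_num) (not_lt.mp hi)
    rw [Nat.testBit_eq_false_of_lt (x.isLt.trans_le hle),
      Nat.testBit_eq_false_of_lt (y.isLt.trans_le hle)]

end BitVectors

section CubeThree

def IsMatchingDir {d : ℕ} (g : Fin (2 ^ d) → Fin d) : Prop := ∀ x, g (flipBit x (g x)) = g x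

instance {d : ℕ} (g : Fin (2 ^ d) → Fin d) : Decidable (IsMatchingDir g) :=
  inferInstanceAs (Decidable (∀ _, _))

def IsDirectional {d : ℕ} (g : Fin (2 ^ d) → Fin d) : Prop := ∀ x y, g x = g y

instance {d : ℕ} (g : Fin (2 ^ d) → Fin d) : Decidable (IsDirectional g) :=
  inferInstanceAs (Decidable (∀ _ _, _))

def faceSwitch (c a b : Fin 3) (x : Fin (2 ^ 3)) : Fin 3 := if x.val.testBit c then b else a

def q3MatchingDirs : Fin 9 → Fin (2 ^ 3) → Fin 3 :=
  ![fun _ => 0, fun _ => 1, fun _ => 2, faceSwitch 0 1 2, faceSwitch 0 2 1, faceSwitch 1 0 2,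
    faceSwitch 1 2 0, faceSwitch 2 0 1, faceSwitch 2 1 0]

theorem exists_q3MatchingDirs_eq {g : Fin (2 ^ 3) → Fin 3} (hg : IsMatchingDir g) :
    ∃ i, q3MatchingDirs i = g := by
  have key : ∀ a b c d e f p q : Fin 3,
      let g : Fin (2 ^ 3) → Fin 3 := fun x => ![a, b, c, d, e, f, p, q] x
      IsMatchingDir g → ∃ i, q3MatchingDirs i = g := by
    decide +kernel
  have hg_eq : g = fun x => ![g 0, g 1, g 2, g 3, g 4, g 5, g 6, g 7] x := by
    funext x
    fin_cases x <;> rfl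
  rw [hg_eq] at hg ⊢
  exact key _ _ _ _ _ _ _ _ hg

theorem xor_isDirectional_of_forall_ne {g₁ g₂ g₃ : Fin (2 ^ 3) → Fin 3}
    (h₁ : IsMatchingDir g₁) (h₂ : IsMatchingDir g₂) (h₃ : IsMatchingDir g₃)
    (hne : ∀ x, g₁ x ≠ g₂ x ∧ g₁ x ≠ g₃ x ∧ g₂ x ≠ g₃ x) :
    Xor (IsDirectional g₁) (Xor (IsDirectional g₂) (IsDirectional g₃)) := by
  have key : ∀ i j k, (∀ x, q3MatchingDirs i x ≠ q3MatchingDirs j x ∧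
      q3MatchingDirs i x ≠ q3MatchingDirs k x ∧ q3MatchingDirs j x ≠ q3MatchingDirs k x) →
      Xor (IsDirectional (q3MatchingDirs i))
        (Xor (IsDirectional (q3MatchingDirs j)) (IsDirectional (q3MatchingDirs k))) := by
    decide +kernel
  obtain ⟨i, rfl⟩ := exists_q3MatchingDirs_eq h₁
  obtain ⟨j, rfl⟩ := exists_q3MatchingDirs_eq h₂
  obtain ⟨k, rfl⟩ := exists_q3MatchingDirs_eq h₃
  exact key i j k hne

end CubeThree

section TwoFactor

-- In the bit encoding of `Q₄`, `x < 8` is the 3-cube `x₄ = 0` and the direction-4 edges are rungs.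

variable (φ : Fin (2 ^ (3 + 1)) → Fin 3)

def matchMove (x : Fin (2 ^ (3 + 1))) : Fin (2 ^ (3 + 1)) := flipBit x (φ x).castSucc

def rungMove (x : Fin (2 ^ (3 + 1))) : Fin (2 ^ (3 + 1)) := flipBit x (Fin.last 3)

def IsProperClosed (C : List (Fin (2 ^ (3 + 1)))) : Prop :=
  0 ∈ C ∧ (∀ y ∈ C, matchMove φ y ∈ C ∧ rungMove y ∈ C) ∧ ∃ y, y ∉ C

instance (C : List (Fin (2 ^ (3 + 1)))) : Decidable (IsProperClosed φ C) :=
  inferInstanceAs (Decidable (_ ∧ _ ∧ _))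

/-- The vertices met by alternating the two moves from `0`; that this set is closed is only
checked by the computation below. -/
def alternatingCycle : List (Fin (2 ^ (3 + 1))) :=
  let evens := List.iterate (rungMove ∘ matchMove φ) 0 8
  evens ++ evens.map (matchMove φ)

theorem isProperClosed_alternatingCycle {g h : Fin (2 ^ 3) → Fin 3}
    (hg : IsMatchingDir g) (hh : IsMatchingDir h) (hgh : IsDirectional g ↔ IsDirectional h) :
    IsProperClosed (Fin.append g h) (alternatingCycle (Fin.append g h)) := by
  have key : ∀ i j, (IsDirectional (q3MatchingDirs i) ↔ IsDirectional (q3MatchingDirs j)) →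
      IsProperClosed (Fin.append (q3MatchingDirs i) (q3MatchingDirs j))
        (alternatingCycle (Fin.append (q3MatchingDirs i) (q3MatchingDirs j))) := by
    decide +kernel
  obtain ⟨i, rfl⟩ := exists_q3MatchingDirs_eq hg
  obtain ⟨j, rfl⟩ := exists_q3MatchingDirs_eq hh
  exact key i j hgh

end TwoFactor

theorem SimpleGraph.Reachable.mem_of_adj_closed {V : Type*} {G : SimpleGraph V} {S : Set V}
    (hS : ∀ u v, G.Adj u v → u ∈ S → v ∈ S) {u v : V} (huv : G.Reachable u v) (hu : u ∈ S) :
    v ∈ S := by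
  obtain ⟨p⟩ := huv
  induction p with
  | nil => exact hu
  | cons hadj _ ih => exact ih (hS _ _ hadj hu)

theorem IsHamCycleSet.reachable {V : Type*} [DecidableEq V] {E : Set (Sym2 V)}
    (hE : IsHamCycleSet E) (u v : V) : (fromEdgeSet E).Reachable u v := by
  obtain ⟨v₀, w, hw, -⟩ := hE
  have h (x : V) : (fromEdgeSet E).Reachable v₀ x := (w.takeUntil x (hw.mem_support x)).reachable
  exact (h u).symm.trans (h v)

section Restriction

variable {M N : Set (Sym2 (Finset (Fin (3 + 1))))} {ψ : Finset (Fin (3 + 1)) → Fin 3}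

def bottomDir (ψ : Finset (Fin (3 + 1)) → Fin 3) (x : Fin (2 ^ 3)) : Fin 3 :=
  ψ (bitSet (Fin.castAdd (2 ^ 3) x))

def topDir (ψ : Finset (Fin (3 + 1)) → Fin 3) (x : Fin (2 ^ 3)) : Fin 3 :=
  ψ (bitSet (Fin.natAdd (2 ^ 3) x))

theorem append_bottomDir_topDir : Fin.append (bottomDir ψ) (topDir ψ) = ψ ∘ bitSet :=
  Fin.append_castAdd_natAdd (m := 2 ^ 3) (n := 2 ^ 3) (f := ψ ∘ bitSet (d := 3 + 1))

theorem IsDirectionMap.apply_bitSet_flipBit (hM : IsDirectionMap M (Fin.castSucc ∘ ψ))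
    (x : Fin (2 ^ (3 + 1))) : ψ (bitSet (flipBit x (ψ (bitSet x)).castSucc)) = ψ (bitSet x) := by
  rw [bitSet_flipBit]
  exact Fin.castSucc_injective _ (hM.apply_symmDiff (bitSet x))

theorem isMatchingDir_bottomDir (hM : IsDirectionMap M (Fin.castSucc ∘ ψ)) :
    IsMatchingDir (bottomDir ψ) := by
  have castAdd_flipBit : ∀ (x : Fin (2 ^ 3)) (j : Fin 3),
      (Fin.castAdd (2 ^ 3) (flipBit x j) : Fin (2 ^ (3 + 1))) =
        flipBit (Fin.castAdd (2 ^ 3) x) j.castSucc := by decide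
  intro x
  simp only [bottomDir, castAdd_flipBit]
  exact hM.apply_bitSet_flipBit _

theorem isMatchingDir_topDir (hM : IsDirectionMap M (Fin.castSucc ∘ ψ)) :
    IsMatchingDir (topDir ψ) := by
  have natAdd_flipBit : ∀ (x : Fin (2 ^ 3)) (j : Fin 3),
      (Fin.natAdd (2 ^ 3) (flipBit x j) : Fin (2 ^ (3 + 1))) =
        flipBit (Fin.natAdd (2 ^ 3) x) j.castSucc := by decide
  intro x
  simp only [topDir, natAdd_flipBit]
  exact hM.apply_bitSet_flipBit _

theorem forall_mem_of_isHamCycleSet (hM : IsDirectionMap M (Fin.castSucc ∘ ψ))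
    (hN : IsDirectionMap N fun _ => Fin.last 3) (hH : IsHamCycleSet (M ∪ N))
    {C : List (Fin (2 ^ (3 + 1)))} (h0 : 0 ∈ C)
    (hC : ∀ y ∈ C, matchMove (ψ ∘ bitSet) y ∈ C ∧ rungMove y ∈ C) (y : Fin (2 ^ (3 + 1))) :
    y ∈ C := by
  let S : Set (Finset (Fin (3 + 1))) := {u | ∃ x ∈ C, bitSet x = u}
  have hS : ∀ u v, (fromEdgeSet (M ∪ N)).Adj u v → u ∈ S → v ∈ S := by
    rintro u v huv ⟨x, hx, rfl⟩
    rcases (fromEdgeSet_adj _).mp huv with ⟨hM' | hN', -⟩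
    · exact ⟨_, (hC x hx).1, by rw [matchMove, bitSet_flipBit, ((hM _ _).mp hM')]; rfl⟩
    · exact ⟨_, (hC x hx).2, by rw [rungMove, bitSet_flipBit, ((hN _ _).mp hN')]⟩
  obtain ⟨x, hx, hxy⟩ := (hH.reachable (bitSet 0) (bitSet y)).mem_of_adj_closed hS ⟨0, h0, rfl⟩
  exact bitSet_injective hxy ▸ hx

theorem isDirectional_bottomDir_iff_not_topDir (hM : IsDirectionMap M (Fin.castSucc ∘ ψ))
    (hN : IsDirectionMap N fun _ => Fin.last 3) (hH : IsHamCycleSet (M ∪ N)) :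
    IsDirectional (bottomDir ψ) ↔ ¬ IsDirectional (topDir ψ) := by
  by_contra hsame
  obtain ⟨h0, hC, y, hy⟩ := isProperClosed_alternatingCycle (isMatchingDir_bottomDir hM)
    (isMatchingDir_topDir hM) (by tauto)
  rw [append_bottomDir_topDir] at h0 hC hy
  exact hy (forall_mem_of_isHamCycleSet hM hN hH h0 hC y)

end Restriction

/-- There is no direction respecting 1-factorization `M₁, M₂, M₃, M₄` of `Q₄` (w.r.t.
the split `3 + 1`) such that `M_i ∪ M₄` is a Hamilton cycle for all `i ∈ {1,2,3}`. -/
theorem statement11 :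
    ¬ ∃ M : Fin (3 + 1) → Set (Sym2 (Finset (Fin (3 + 1)))),
        IsFactorization (cube (3 + 1)) M ∧ DirectionRespecting 3 1 M ∧
        ∀ i : Fin (3 + 1), (i : ℕ) < 3 → IsHamCycleSet (M i ∪ M 3) := by
  rintro ⟨M, ⟨hPM, hdisj, -⟩, hdir, hham⟩
  have hrung : IsDirectionMap (M 3) fun _ => Fin.last 3 :=
    (hPM 3).isDirectionMap_const <| (hdir 3).mono fun j (hj : (j : ℕ) < 3 ↔ _) =>
      Fin.ext <| by have := (not_congr hj).mpr (by decide); rw [Fin.val_last]; omega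
  choose ψ hψ using fun i : Fin 3 =>
    (hPM i.castSucc).exists_isDirectionMap_castAdd ((hdir i.castSucc).mono fun j hj => hj.mpr i.isLt)
  have hpair (i : Fin 3) : IsDirectional (bottomDir (ψ i)) ↔ ¬ IsDirectional (topDir (ψ i)) :=
    isDirectional_bottomDir_iff_not_topDir (hψ i) hrung (hham i.castSucc i.isLt)
  have hne (i j : Fin 3) (hij : i ≠ j) (v) : ψ i v ≠ ψ j v := fun h =>
    (hψ i).apply_ne_of_disjoint (hψ j) (hdisj _ _ (Fin.castSucc_injective _ |>.ne hij)) v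
      (congrArg Fin.castSucc h)
  have hbottom := xor_isDirectional_of_forall_ne (isMatchingDir_bottomDir (hψ 0))
    (isMatchingDir_bottomDir (hψ 1)) (isMatchingDir_bottomDir (hψ 2))
    fun _ => ⟨hne 0 1 (by decide) _, hne 0 2 (by decide) _, hne 1 2 (by decide) _⟩
  have htop := xor_isDirectional_of_forall_ne (isMatchingDir_topDir (hψ 0))
    (isMatchingDir_topDir (hψ 1)) (isMatchingDir_topDir (hψ 2))
    fun _ => ⟨hne 0 1 (by decide) _, hne 0 2 (by decide) _, hne 1 2 (by decide) _⟩
  unfold Xor at hbottom htop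
  have := hpair 0; have := hpair 1; have := hpair 2
  tauto
end

section
/- Let l ∈ {1, 3} and d = 3 + l, and let M = {M_1, M_2, M_3} ∪ {N_1, …, N_l} be a 1-factorization of the hypercube Q_d such that M_i ∪ N_j is a Hamilton cycle for every i ∈ {1, 2, 3} and j ∈ {1, …, l}. Then sign(M) = −1. -/
open SimpleGraph

/-- The even vertices of `Q_d`. -/
abbrev EvenVertex (d : ℕ) := {v : Finset (Fin d) // Even v.card}

/-- The odd vertices of `Q_d`. -/
abbrev OddVertex (d : ℕ) := {v : Finset (Fin d) // ¬ Even v.card}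

/-- The bijection `f` from the odd vertices to the even vertices represents the perfect
matching `M`: it sends every odd vertex to its partner in `M`. -/
def Represents {d : ℕ} (M : Set (Sym2 (Finset (Fin d)))) (f : OddVertex d ≃ EvenVertex d) : Prop :=
  ∀ x : OddVertex d, s(x.val, (f x).val) ∈ M

/-- The sign of a 1-factorization, given as the family of bijections (odd → even)
representing its matchings: the product over all pairs `i < j` of the signs of the
permutations `M_i ∘ M_j⁻¹` of the even vertices. -/
noncomputable def factorizationSign {d : ℕ} (f : Fin d → (OddVertex d ≃ EvenVertex d)) : ℤˣ :=
  ∏ p ∈ Finset.univ.filter (fun p : Fin d × Fin d => p.1 < p.2),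
    Equiv.Perm.sign ((f p.2).symm.trans (f p.1))

/-!
If `M_i ∪ M_j` is a Hamilton cycle, walking along it two steps at a time moves an even vertex
by `M_i ∘ M_j⁻¹` or its inverse, so this permutation is a single cycle through all `2^(d-1)`
even vertices and has sign `-1`. Composing through a fixed index on the other side, a pair of
matchings on the same side of the split `{M_1, M_2, M_3} ∪ {N_1, …, N_l}` contributes `+1`, so
`sign(M) = (-1)^(3l) = -1` for odd `l`.
-/

open scoped symmDiff

theorem Finset.card_add_card_eq_card_symmDiff_add {α : Type*} [DecidableEq α] (u v : Finset α) :
    u.card + v.card = (u ∆ v).card + 2 * (u ∩ v).card := by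
  have hsub : u ∩ v ⊆ u ∪ v := Finset.inter_subset_union
  have hle := Finset.card_le_card hsub
  rw [symmDiff_eq_sup_sdiff_inf, Finset.sup_eq_union, Finset.inf_eq_inter,
    Finset.card_sdiff_of_subset hsub, ← Finset.card_union_add_card_inter]
  omega

theorem cube_adj_even_iff {d : ℕ} {u v : Finset (Fin d)} (h : (cube d).Adj u v) :
    Even u.card ↔ ¬ Even v.card := by
  have hcard : (u ∆ v).card = 1 := h
  have := Finset.card_add_card_eq_card_symmDiff_add u v
  rw [Nat.even_iff, Nat.even_iff]
  omega

theorem cube_adj_symmDiff_singleton {d : ℕ} (u : Finset (Fin d)) (i : Fin d) :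
    (cube d).Adj u ({i} ∆ u) := by
  show (u ∆ ({i} ∆ u)).card = 1
  rw [symmDiff_comm {i} u, symmDiff_symmDiff_cancel_left, Finset.card_singleton]

theorem card_evenVertex {d : ℕ} (hd : 1 ≤ d) : Fintype.card (EvenVertex d) = 2 ^ (d - 1) := by
  have hflip : Fintype.card (EvenVertex d) = Fintype.card (OddVertex d) :=
    Fintype.card_congr <| Equiv.subtypeEquiv ((symmDiff_right_involutive {⟨0, hd⟩}).toPerm _)
      fun u => cube_adj_even_iff (cube_adj_symmDiff_singleton u _)
  have hcompl : Fintype.card (OddVertex d) = 2 ^ d - Fintype.card (EvenVertex d) := by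
    have := Fintype.card_subtype_compl (fun u : Finset (Fin d) => Even u.card)
    rwa [Fintype.card_finset, Fintype.card_fin] at this
  have hle : Fintype.card (EvenVertex d) ≤ 2 ^ d := by
    have := Fintype.card_subtype_le (fun u : Finset (Fin d) => Even u.card)
    rwa [Fintype.card_finset, Fintype.card_fin] at this
  obtain ⟨k, rfl⟩ : ∃ k, d = k + 1 := ⟨d - 1, by omega⟩
  rw [Nat.add_sub_cancel]
  rw [pow_succ] at hcompl hle
  omega

theorem IsPM.eq_of_mem {V : Type*} {G : SimpleGraph V} {M : Set (Sym2 V)} (hM : IsPM G M)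
    {a b c : V} (hb : s(a, b) ∈ M) (hc : s(a, c) ∈ M) : b = c := by
  obtain ⟨e, -, huniq⟩ := hM.2 a
  exact Sym2.congr_right.1 <|
    (huniq _ ⟨hb, Sym2.mem_mk_left _ _⟩).trans (huniq _ ⟨hc, Sym2.mem_mk_left _ _⟩).symm

theorem Represents.apply_eq {d : ℕ} {G : SimpleGraph (Finset (Fin d))}
    {M : Set (Sym2 (Finset (Fin d)))} {f : OddVertex d ≃ EvenVertex d} (hM : IsPM G M)
    (hf : Represents M f) {x : OddVertex d} {v : Finset (Fin d)} (hv : s(x.val, v) ∈ M) :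
    (f x).val = v :=
  hM.eq_of_mem (hf x) hv

theorem Equiv.Perm.sign_eq_of_forall_sameCycle {α : Type*} [Fintype α] [DecidableEq α]
    [Nontrivial α] {g : Equiv.Perm α} (h : ∀ x y, g.SameCycle x y) :
    Equiv.Perm.sign g = -(-1) ^ Fintype.card α := by
  have hfree : ∀ x, g x ≠ x := fun x hx =>
    let ⟨y, hy⟩ := exists_ne x
    hy ((h x y).eq_of_left hx).symm
  have hcycle : g.IsCycle := ⟨Classical.arbitrary α, hfree _, fun y _ => h _ y⟩
  have hsupp : g.support = Finset.univ := by
    ext x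
    simp [hfree x]
  rw [hcycle.sign, hsupp, Finset.card_univ]

section SignAlgebra

variable {α β : Type*} [Fintype β] [DecidableEq β] (e₁ e₂ e₃ : α ≃ β)

theorem sign_symm_trans_comm :
    Equiv.Perm.sign (e₁.symm.trans e₂) = Equiv.Perm.sign (e₂.symm.trans e₁) := by
  rw [← Equiv.Perm.sign_inv]
  rfl

theorem sign_symm_trans_eq_mul :
    Equiv.Perm.sign (e₃.symm.trans e₁)
      = Equiv.Perm.sign (e₂.symm.trans e₁) * Equiv.Perm.sign (e₃.symm.trans e₂) := by
  rw [← map_mul]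
  congr 1
  ext x
  simp

end SignAlgebra

section HamiltonCycle

variable {d : ℕ} {Mi Mj : Set (Sym2 (Finset (Fin d)))} {fi fj : OddVertex d ≃ EvenVertex d}

/-- Collapses every edge of the matching represented by `f` onto its even endpoint. -/
def evenOrPartner (f : OddVertex d ≃ EvenVertex d) (u : Finset (Fin d)) : EvenVertex d :=
  if h : Even u.card then ⟨u, h⟩ else f ⟨u, h⟩

theorem evenOrPartner_of_even (f : OddVertex d ≃ EvenVertex d) (x : EvenVertex d) :
    evenOrPartner f x.val = x :=
  dif_pos x.2

theorem sameCycle_evenOrPartner_of_mem (hMi : IsPM (cube d) Mi) (hMj : IsPM (cube d) Mj)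
    (hfi : Represents Mi fi) (hfj : Represents Mj fj) {u v : Finset (Fin d)}
    (hu : ¬ Even u.card) (hv : Even v.card) (huv : s(u, v) ∈ Mi ∪ Mj) :
    Equiv.Perm.SameCycle (fj.symm.trans fi) (evenOrPartner fi u) (evenOrPartner fi v) := by
  rw [evenOrPartner, evenOrPartner, dif_neg hu, dif_pos hv]
  rcases huv with huv | huv
  · have hfi_u : fi ⟨u, hu⟩ = ⟨v, hv⟩ := Subtype.ext (hfi.apply_eq hMi (v := v) huv)
    rw [hfi_u]
  · have hfj_u : fj ⟨u, hu⟩ = ⟨v, hv⟩ := Subtype.ext (hfj.apply_eq hMj (v := v) huv)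
    have hg : (fj.symm.trans fi) ⟨v, hv⟩ = fi ⟨u, hu⟩ := by
      rw [Equiv.trans_apply, ← hfj_u, Equiv.symm_apply_apply]
    rw [← hg]
    exact (Equiv.Perm.sameCycle_apply_right.2 (Equiv.Perm.SameCycle.refl _ _)).symm

theorem sameCycle_evenOrPartner_of_adj (hMi : IsPM (cube d) Mi) (hMj : IsPM (cube d) Mj)
    (hfi : Represents Mi fi) (hfj : Represents Mj fj) {u v : Finset (Fin d)}
    (huv : (fromEdgeSet (Mi ∪ Mj)).Adj u v) :
    Equiv.Perm.SameCycle (fj.symm.trans fi) (evenOrPartner fi u) (evenOrPartner fi v) := by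
  have hmem : s(u, v) ∈ Mi ∪ Mj := ((fromEdgeSet_adj _).1 huv).1
  have hcube : (cube d).Adj u v := by
    rcases hmem with h | h
    · exact (cube d).mem_edgeSet.1 (hMi.1 h)
    · exact (cube d).mem_edgeSet.1 (hMj.1 h)
  by_cases hu : Even u.card
  · rw [Sym2.eq_swap] at hmem
    exact (sameCycle_evenOrPartner_of_mem hMi hMj hfi hfj ((cube_adj_even_iff hcube).1 hu) hu
      hmem).symm
  · exact sameCycle_evenOrPartner_of_mem hMi hMj hfi hfj hu
      (not_not.1 (mt (cube_adj_even_iff hcube).2 hu)) hmem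

theorem sameCycle_evenOrPartner_of_reachable (hMi : IsPM (cube d) Mi) (hMj : IsPM (cube d) Mj)
    (hfi : Represents Mi fi) (hfj : Represents Mj fj) {u v : Finset (Fin d)}
    (huv : (fromEdgeSet (Mi ∪ Mj)).Reachable u v) :
    Equiv.Perm.SameCycle (fj.symm.trans fi) (evenOrPartner fi u) (evenOrPartner fi v) := by
  obtain ⟨p⟩ := huv
  induction p with
  | nil => exact Equiv.Perm.SameCycle.refl _ _
  | cons h _ ih => exact (sameCycle_evenOrPartner_of_adj hMi hMj hfi hfj h).trans ih

theorem sign_symm_trans_eq_neg_one_of_isHamCycleSet (hd : 2 ≤ d) (hMi : IsPM (cube d) Mi)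
    (hMj : IsPM (cube d) Mj) (hham : IsHamCycleSet (Mi ∪ Mj)) (hfi : Represents Mi fi)
    (hfj : Represents Mj fj) :
    Equiv.Perm.sign (fj.symm.trans fi) = -1 := by
  obtain ⟨v, w, hw, -⟩ := hham
  have hconn : (fromEdgeSet (Mi ∪ Mj)).Connected :=
    IsHamiltonian.connected fun _ => ⟨v, w, hw⟩
  have hcard := card_evenVertex (d := d) (by omega)
  have : Nontrivial (EvenVertex d) :=
    Fintype.one_lt_card_iff_nontrivial.1 (hcard ▸ Nat.one_lt_two_pow (by omega))
  have hsame : ∀ x y : EvenVertex d, Equiv.Perm.SameCycle (fj.symm.trans fi) x y := fun x y => by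
    simpa only [evenOrPartner_of_even] using
      sameCycle_evenOrPartner_of_reachable hMi hMj hfi hfj (hconn.preconnected x.val y.val)
  rw [Equiv.Perm.sign_eq_of_forall_sameCycle hsame, hcard,
    (Nat.even_pow.2 ⟨even_two, by omega⟩).neg_one_pow]

end HamiltonCycle

theorem sign_symm_trans_eq_ite {ι α β : Type*} [Fintype β] [DecidableEq β] (e : ι → α ≃ β)
    (P : ι → Prop) [DecidablePred P] {i₀ j₀ : ι} (hi₀ : P i₀) (hj₀ : ¬ P j₀)
    (hcross : ∀ i j, P i → ¬ P j → Equiv.Perm.sign ((e j).symm.trans (e i)) = -1) (i j : ι) :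
    Equiv.Perm.sign ((e j).symm.trans (e i)) = if (P i ↔ P j) then 1 else -1 := by
  by_cases hi : P i <;> by_cases hj : P j
  · rw [if_pos (iff_of_true hi hj), sign_symm_trans_eq_mul (e i) (e j₀) (e j),
      sign_symm_trans_comm (e j), hcross i j₀ hi hj₀, hcross j j₀ hj hj₀]
    rfl
  · rw [if_neg (fun h => hj (h.1 hi)), hcross i j hi hj]
  · rw [if_neg (fun h => hi (h.2 hj)), sign_symm_trans_comm, hcross j i hj hi]
  · rw [if_pos (iff_of_false hi hj), sign_symm_trans_eq_mul (e i) (e i₀) (e j),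
      sign_symm_trans_comm (e i₀), hcross i₀ i hi₀ hi, hcross i₀ j hi₀ hj]
    rfl

/-- Exactly `3 * l` of the pairs cross the split, and `3 * l` is odd. -/
theorem prod_ite_lt_three_iff_lt_three (l : ℕ) (hl : l = 1 ∨ l = 3) :
    ∏ p ∈ Finset.univ.filter (fun p : Fin (3 + l) × Fin (3 + l) => p.1 < p.2),
      (if ((p.1 : ℕ) < 3 ↔ (p.2 : ℕ) < 3) then 1 else -1 : ℤˣ) = -1 := by
  rcases hl with rfl | rfl <;> decide

/-- For `l ∈ {1, 3}` and `d = 3 + l`, any 1-factorization of `Q_d` in which each of the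
first three matchings forms a Hamilton cycle with each of the last `l` matchings has
sign `-1`. -/
theorem statement14 (l : ℕ) (hl : l = 1 ∨ l = 3)
    (M : Fin (3 + l) → Set (Sym2 (Finset (Fin (3 + l)))))
    (hM : IsFactorization (cube (3 + l)) M)
    (hham : ∀ i j : Fin (3 + l), (i : ℕ) < 3 → 3 ≤ (j : ℕ) →
      IsHamCycleSet (M i ∪ M j))
    (f : Fin (3 + l) → (OddVertex (3 + l) ≃ EvenVertex (3 + l)))
    (hf : ∀ i, Represents (M i) (f i)) :
    factorizationSign f = -1 := by
  obtain ⟨hPM, -, -⟩ := hM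
  have hcross : ∀ i j : Fin (3 + l), (i : ℕ) < 3 → ¬ (j : ℕ) < 3 →
      Equiv.Perm.sign ((f j).symm.trans (f i)) = -1 := fun i j hi hj =>
    sign_symm_trans_eq_neg_one_of_isHamCycleSet (by omega) (hPM i) (hPM j)
      (hham i j hi (not_lt.1 hj)) (hf i) (hf j)
  have hpair := sign_symm_trans_eq_ite f (fun k => (k : ℕ) < 3)
    (i₀ := ⟨0, by omega⟩) (j₀ := ⟨3, by omega⟩) (by simp) (by simp) hcross
  rw [factorizationSign, Finset.prod_congr rfl fun p _ => hpair p.1 p.2]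
  exact prod_ite_lt_three_iff_lt_three l hl
end
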